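/- arXiv:2405.09106 — 2 statements merged into one kernel-verified Lean document; each statement's English description precedes it below -/
import Mathlib

section
/- Let f : ℝⁿ → ℝ be differentiable with L-Lipschitz gradient and satisfy the PL inequality (1/2)‖∇f(x)‖² ≥ l (f(x) − f*) with 0 < l ≤ L, where f* = f(x*) is the global minimum. Then gradient descent with constant step size h = 1/L, i.e., x_{k+1} = x_k − (1/L)∇f(x_k), satisfies f(x_k) − f* ≤ (1 − l/L)^k (f(x_0) − f*) for all k. -/
/-!
Along the segment `t ↦ x + t • v`, the `L`-Lipschitz gradient makes `f` lie below the quadratic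
`f x + t ⟪∇f x, v⟫ + L t² ‖v‖² / 2`, so a gradient step of length `1 / L` decreases `f` by at least
`‖∇f x‖² / (2L)`. The PL inequality bounds this decrease from below by `(l / L) (f x - f*)`, so the
optimality gap contracts by the factor `1 - l / L` at every step.
-/

open scoped RealInnerProductSpace

section LipschitzGradient

variable {E : Type*} [NormedAddCommGroup E] [InnerProductSpace ℝ E] [CompleteSpace E]
  {f : E → ℝ} {L : ℝ}

theorem hasDerivAt_comp_add_smul (hf : Differentiable ℝ f) (x v : E) (t : ℝ) :
    HasDerivAt (fun s : ℝ => f (x + s • v)) ⟪gradient f (x + t • v), v⟫ t := by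
  have hline : HasDerivAt (fun s : ℝ => x + s • v) v t := by
    simpa using ((hasDerivAt_id t).smul_const v).const_add x
  have h := (hf _).hasGradientAt.hasFDerivAt.comp_hasDerivAt t hline
  simp only [InnerProductSpace.toDual_apply_apply] at h
  exact h

theorem le_add_inner_gradient_add_sq_of_lipschitz_gradient (hf : Differentiable ℝ f)
    (hlip : ∀ x y, ‖gradient f x - gradient f y‖ ≤ L * ‖x - y‖) (x v : E) :
    f (x + v) ≤ f x + ⟪gradient f x, v⟫ + L / 2 * ‖v‖ ^ 2 := by
  -- The gap `φ t` below the quadratic majorant vanishes at `0` and is antitone on `t ≥ 0`.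
  set φ : ℝ → ℝ := fun t => f (x + t • v) - t * ⟪gradient f x, v⟫ - L / 2 * t ^ 2 * ‖v‖ ^ 2
  have hφ' : ∀ t, HasDerivAt φ
      (⟪gradient f (x + t • v) - gradient f x, v⟫ - L * t * ‖v‖ ^ 2) t := by
    intro t
    refine (((hasDerivAt_comp_add_smul hf x v t).sub
      ((hasDerivAt_id t).mul_const ⟪gradient f x, v⟫)).sub
      (((hasDerivAt_pow 2 t).const_mul (L / 2)).mul_const (‖v‖ ^ 2))).congr_deriv ?_
    rw [inner_sub_left, Nat.cast_ofNat, pow_one]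
    ring
  have hφ'_nonpos : ∀ t ∈ interior (Set.Ici (0 : ℝ)),
      ⟪gradient f (x + t • v) - gradient f x, v⟫ - L * t * ‖v‖ ^ 2 ≤ 0 := by
    intro t ht
    rw [interior_Ici, Set.mem_Ioi] at ht
    rw [sub_nonpos]
    calc ⟪gradient f (x + t • v) - gradient f x, v⟫
        ≤ ‖gradient f (x + t • v) - gradient f x‖ * ‖v‖ := real_inner_le_norm _ _
      _ ≤ L * ‖t • v‖ * ‖v‖ := by
          simpa using mul_le_mul_of_nonneg_right (hlip (x + t • v) x) (norm_nonneg v)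
      _ = L * t * ‖v‖ ^ 2 := by rw [norm_smul, Real.norm_of_nonneg ht.le]; ring
  have hφ_anti : AntitoneOn φ (Set.Ici 0) :=
    antitoneOn_of_hasDerivWithinAt_nonpos (convex_Ici 0)
      (fun t _ => (hφ' t).continuousAt.continuousWithinAt)
      (fun t _ => (hφ' t).hasDerivWithinAt) hφ'_nonpos
  have hφ01 := hφ_anti Set.self_mem_Ici (Set.mem_Ici.mpr zero_le_one) zero_le_one
  simp only [φ, zero_smul, one_smul, add_zero, zero_mul, one_mul, sub_zero, one_pow, mul_one,
    mul_zero, zero_pow two_ne_zero] at hφ01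
  linarith

theorem apply_sub_gradient_le (hf : Differentiable ℝ f)
    (hlip : ∀ x y, ‖gradient f x - gradient f y‖ ≤ L * ‖x - y‖) (x : E) :
    f (x - (1 / L) • gradient f x) ≤ f x - 1 / (2 * L) * ‖gradient f x‖ ^ 2 := by
  have h := le_add_inner_gradient_add_sq_of_lipschitz_gradient hf hlip x (-(1 / L) • gradient f x)
  rw [neg_smul, ← sub_eq_add_neg, inner_neg_right, real_inner_smul_right,
    real_inner_self_eq_norm_sq, norm_neg, norm_smul, mul_pow, Real.norm_eq_abs, sq_abs] at h
  have hcoeff : -(1 / L * ‖gradient f x‖ ^ 2) + L / 2 * ((1 / L) ^ 2 * ‖gradient f x‖ ^ 2)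
      = -(1 / (2 * L) * ‖gradient f x‖ ^ 2) := by
    rcases eq_or_ne L 0 with rfl | hL
    · simp
    · field_simp
      ring
  linarith

theorem apply_sub_gradient_sub_le_of_PL (hf : Differentiable ℝ f)
    (hlip : ∀ x y, ‖gradient f x - gradient f y‖ ≤ L * ‖x - y‖) (hL : 0 < L)
    {l fstar : ℝ} {x : E} (hPL : l * (f x - fstar) ≤ 1 / 2 * ‖gradient f x‖ ^ 2) :
    f (x - (1 / L) • gradient f x) - fstar ≤ (1 - l / L) * (f x - fstar) := by
  have hdecrease := apply_sub_gradient_le hf hlip x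
  have hPL_scaled : l / L * (f x - fstar) ≤ 1 / (2 * L) * ‖gradient f x‖ ^ 2 :=
    calc l / L * (f x - fstar) = 1 / L * (l * (f x - fstar)) := by ring
      _ ≤ 1 / L * (1 / 2 * ‖gradient f x‖ ^ 2) := by gcongr
      _ = 1 / (2 * L) * ‖gradient f x‖ ^ 2 := by ring
  linarith

end LipschitzGradient

theorem gradient_descent_linear_rate_of_PL_general
    {n : ℕ} (f : EuclideanSpace ℝ (Fin n) → ℝ)
    (hf : Differentiable ℝ f)
    (L l : ℝ) (hl : 0 < l) (hlL : l ≤ L)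
    (hlip : ∀ x y, ‖gradient f x - gradient f y‖ ≤ L * ‖x - y‖)
    (fstar : ℝ)
    (hPL : ∀ x, l * (f x - fstar) ≤ (1 / 2) * ‖gradient f x‖ ^ 2)
    (x : ℕ → EuclideanSpace ℝ (Fin n))
    (hiter : ∀ k, x (k + 1) = x k - (1 / L) • gradient f (x k)) :
    ∀ k, f (x k) - fstar ≤ (1 - l / L) ^ k * (f (x 0) - fstar) := by
  have hL : 0 < L := hl.trans_le hlL
  have hrate : 0 ≤ 1 - l / L := sub_nonneg.mpr (div_le_one_of_le₀ hlL hL.le)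
  intro k
  refine le_geom (u := fun k => f (x k) - fstar) hrate k fun j _ => ?_
  simpa only [hiter j] using apply_sub_gradient_sub_le_of_PL hf hlip hL (hPL (x j))

theorem gradient_descent_linear_rate_of_PL
    {n : ℕ} (f : EuclideanSpace ℝ (Fin n) → ℝ)
    (hf : Differentiable ℝ f)
    (L l : ℝ) (hl : 0 < l) (hlL : l ≤ L)
    (hlip : ∀ x y, ‖gradient f x - gradient f y‖ ≤ L * ‖x - y‖)
    (fstar : ℝ) (xstar : EuclideanSpace ℝ (Fin n))
    (hattain : f xstar = fstar)
    (hlb : ∀ x, fstar ≤ f x)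
    (hPL : ∀ x, l * (f x - fstar) ≤ (1 / 2) * ‖gradient f x‖ ^ 2)
    (x : ℕ → EuclideanSpace ℝ (Fin n))
    (hiter : ∀ k, x (k + 1) = x k - (1 / L) • gradient f (x k)) :
    ∀ k, f (x k) - fstar ≤ (1 - l / L) ^ k * (f (x 0) - fstar) :=
  gradient_descent_linear_rate_of_PL_general f hf L l hl hlL hlip fstar hPL x hiter
end

section
/- Suppose for all k, a sequence Φ_k ≥ f* satisfies E-form recursion T_k ≤ 2L(Φ_k − Φ_{k+1}) + 2σ_k² and 2l(Φ_k − f*) ≤ T_k + μ L² (n+3)^{3/2} d + 2 L d σ_k, where L, l, μ, d > 0 and σ_k ≥ 0. Then for all N: (1/(N+1)) Σ_{k=0}^N (Φ_k − f*) ≤ (L/l)(Φ_0 − f*)/(N+1) + μ d L² (n+3)^{3/2}/(2l) + (L d)/(l(N+1)) Σ_{k=0}^N σ_k + (1/(l(N+1))) Σ_{k=0}^N σ_k². -/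
/-!
Eliminating `T k` between the two inequalities bounds `2 l (Φ k - f*)` by `2 L (Φ k - Φ (k+1))`
plus a per-step error; summing, the first term telescopes to at most `2 L (Φ 0 - f*)`, and
dividing by `2 l (N + 1)` gives the averaged bound.
-/

open Finset

theorem sum_range_le_mul_sub_add_sum {Φ a b : ℕ → ℝ} {c f : ℝ} {m : ℕ} (hc : 0 ≤ c)
    (hf : f ≤ Φ m) (h : ∀ k, a k ≤ c * (Φ k - Φ (k + 1)) + b k) :
    ∑ k ∈ range m, a k ≤ c * (Φ 0 - f) + ∑ k ∈ range m, b k :=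
  calc ∑ k ∈ range m, a k
      ≤ ∑ k ∈ range m, (c * (Φ k - Φ (k + 1)) + b k) := sum_le_sum fun k _ => h k
    _ = c * (Φ 0 - Φ m) + ∑ k ∈ range m, b k := by
        rw [sum_add_distrib, ← mul_sum, sum_range_sub']
    _ ≤ c * (Φ 0 - f) + ∑ k ∈ range m, b k := by gcongr

theorem constrained_convergence_arithmetic_general
    (Φ T σ : ℕ → ℝ) (L l μ d fstar : ℝ) (n : ℕ)
    (hL : 0 < L) (hl : 0 < l)
    (hΦ : ∀ k, fstar ≤ Φ k)
    (hrec : ∀ k, T k ≤ 2 * L * (Φ k - Φ (k + 1)) + 2 * (σ k) ^ 2)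
    (hPL : ∀ k, 2 * l * (Φ k - fstar) ≤
      T k + μ * L ^ 2 * ((n : ℝ) + 3) ^ ((3 : ℝ) / 2) * d + 2 * L * d * σ k) :
    ∀ N : ℕ,
      (1 / ((N : ℝ) + 1)) * ∑ k ∈ Finset.range (N + 1), (Φ k - fstar) ≤
        (L / l) * (Φ 0 - fstar) / ((N : ℝ) + 1)
        + μ * d * L ^ 2 * ((n : ℝ) + 3) ^ ((3 : ℝ) / 2) / (2 * l)
        + (L * d) / (l * ((N : ℝ) + 1)) * ∑ k ∈ Finset.range (N + 1), σ k
        + (1 / (l * ((N : ℝ) + 1))) * ∑ k ∈ Finset.range (N + 1), (σ k) ^ 2 := by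
  intro N
  set K := μ * L ^ 2 * ((n : ℝ) + 3) ^ ((3 : ℝ) / 2) * d
  have hstep : ∀ k, 2 * l * (Φ k - fstar) ≤
      2 * L * (Φ k - Φ (k + 1)) + (K + 2 * L * d * σ k + 2 * σ k ^ 2) :=
    fun k => by linarith [hrec k, hPL k]
  have hsum := sum_range_le_mul_sub_add_sum (by positivity) (hΦ (N + 1)) hstep
  simp only [← mul_sum, sum_add_distrib, sum_const, card_range, nsmul_eq_mul] at hsum
  push_cast at hsum
  have hN : (0 : ℝ) < N + 1 := by positivity
  calc (1 / ((N : ℝ) + 1)) * ∑ k ∈ range (N + 1), (Φ k - fstar)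
      = (2 * l * ∑ k ∈ range (N + 1), (Φ k - fstar)) / (2 * l * (N + 1)) := by
        field_simp
    _ ≤ (2 * L * (Φ 0 - fstar) + ((N + 1) * K + 2 * L * d * ∑ k ∈ range (N + 1), σ k
          + 2 * ∑ k ∈ range (N + 1), σ k ^ 2)) / (2 * l * (N + 1)) := by gcongr
    _ = _ := by field_simp; ring

theorem constrained_convergence_arithmetic
    (Φ T σ : ℕ → ℝ) (L l μ d fstar : ℝ) (n : ℕ)
    (hL : 0 < L) (hl : 0 < l) (hμ : 0 < μ) (hd : 0 < d)
    (hΦ : ∀ k, fstar ≤ Φ k) (hσ : ∀ k, 0 ≤ σ k)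
    (hrec : ∀ k, T k ≤ 2 * L * (Φ k - Φ (k + 1)) + 2 * (σ k) ^ 2)
    (hPL : ∀ k, 2 * l * (Φ k - fstar) ≤
      T k + μ * L ^ 2 * ((n : ℝ) + 3) ^ ((3 : ℝ) / 2) * d + 2 * L * d * σ k) :
    ∀ N : ℕ,
      (1 / ((N : ℝ) + 1)) * ∑ k ∈ Finset.range (N + 1), (Φ k - fstar) ≤
        (L / l) * (Φ 0 - fstar) / ((N : ℝ) + 1)
        + μ * d * L ^ 2 * ((n : ℝ) + 3) ^ ((3 : ℝ) / 2) / (2 * l)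
        + (L * d) / (l * ((N : ℝ) + 1)) * ∑ k ∈ Finset.range (N + 1), σ k
        + (1 / (l * ((N : ℝ) + 1))) * ∑ k ∈ Finset.range (N + 1), (σ k) ^ 2 :=
  constrained_convergence_arithmetic_general Φ T σ L l μ d fstar n hL hl hΦ hrec hPL
end
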